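/- arXiv:2206.09172 — 5 statements merged into one kernel-verified Lean document; each statement's English description precedes it below -/
import Mathlib

section
/- (Combinatorial content of Corollary 3.17(1), type D, highest weight supported below k.) Let n ≥ 4 and 2 ≤ k ≤ n−2, and let a_1,…,a_n be integers with a_u = 0 for all k ≤ u ≤ n and 0 ≤ a_u ≤ 2n−2k−1 for all 1 ≤ u ≤ k−1. Then every integer l with 1 ≤ l ≤ M^D_{k,a} belongs to the step-matrix entry set S^D_{k,a}. -/
open Finset

/-- The step-matrix entry set `S^D_{k,a}`. -/
def SD (n k : ℕ) (a : ℕ → ℤ) : Set ℚ :=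
  {x | ∃ i j : ℕ, 1 ≤ i ∧ i ≤ k ∧ 1 ≤ j ∧ j ≤ n - k ∧
    x = (∑ u ∈ Icc (k + 1 - i) (k + j - 1), (a u : ℚ)) + i + j - 1} ∪
  {x | ∃ i j : ℕ, 1 ≤ i ∧ i ≤ k ∧ 1 ≤ j ∧ j ≤ n - k ∧
    x = (∑ u ∈ Icc (k + 1 - i) (n - 2), (a u : ℚ))
      + (∑ u ∈ Icc (n + 1 - j) n, (a u : ℚ))
      + n - k + i + j - 2} ∪
  {x | ∃ i j : ℕ, 1 ≤ i ∧ i < j ∧ j ≤ k ∧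
    x = ((∑ u ∈ Icc (k + 1 - i) (n - 2), (a u : ℚ))
      + (∑ u ∈ Icc (k + 1 - j) n, (a u : ℚ))
      + i + j + 2 * n - 2 * k - 2) / 2}

/-- `M^D_{k,a}`, the largest entry of the step matrix. -/
def MD (n k : ℕ) (a : ℕ → ℤ) : ℤ :=
  (∑ u ∈ Icc 1 n, a u) + (∑ u ∈ Icc (k + 1) (n - 2), a u)
    + 2 * (n : ℤ) - (k : ℤ) - 2

/-!
Write `S_i = sumBelow k a i = a_{k+1-i} + ⋯ + a_{k-1}`. Since `a` vanishes on `[k, n]`, the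
entries of the first two kinds with a fixed `i` are exactly the integers of the block
`[S_i + i, S_i + i + 2(n-k) - 2]`. The block `i + 1` starts `a_{k-i} + 1 ≤ 2(n-k)` after the
block `i`, so consecutive blocks leave at most the single integer `S_i + i + 2(n-k) - 1`
uncovered, and then `a_{k-i} = 2(n-k) - 1` makes it the entry of the third kind for the
pair `(i, i+1)`. The blocks run from `S_1 + 1 = 1` to `S_k + k + 2(n-k) - 2 = M^D_{k,a}`.
-/

theorem Set.Icc_subset_of_chain {α : Type*} [LinearOrder α] {X : Set α} (lo hi : ℕ → α)
    (m : ℕ) (hblock : ∀ i ≤ m, Icc (lo i) (hi i) ⊆ X)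
    (hbridge : ∀ i < m, Icc (hi i) (lo (i + 1)) ⊆ X) :
    Icc (lo 0) (hi m) ⊆ X := by
  induction m with
  | zero => exact hblock 0 le_rfl
  | succ m ih =>
    rintro x ⟨hx₀, hx⟩
    rcases le_or_gt x (hi m) with hxm | hxm
    · exact ih (fun i hi => hblock i (by omega)) (fun i hi => hbridge i (by omega))
        ⟨hx₀, hxm⟩
    rcases le_or_gt x (lo (m + 1)) with hxl | hxl
    · exact hbridge m (by omega) ⟨hxm.le, hxl⟩
    · exact hblock (m + 1) le_rfl ⟨hxl.le, hx⟩

section Vanishing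

variable {M : Type*} [AddCommMonoid M] {f : ℕ → M} {k n : ℕ}

theorem sum_Icc_eq_sum_Icc_pred_of_vanish (hf : ∀ u, k ≤ u → u ≤ n → f u = 0) (s : ℕ)
    {m : ℕ} (hkm : k - 1 ≤ m) (hmn : m ≤ n) :
    ∑ u ∈ Icc s m, f u = ∑ u ∈ Icc s (k - 1), f u := by
  refine (sum_subset (Icc_subset_Icc le_rfl hkm) fun u hu hu' => ?_).symm
  simp only [mem_Icc] at hu hu'
  exact hf u (by omega) (by omega)

theorem sum_Icc_eq_zero_of_vanish (hf : ∀ u, k ≤ u → u ≤ n → f u = 0) {s m : ℕ}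
    (hks : k ≤ s) (hmn : m ≤ n) :
    ∑ u ∈ Icc s m, f u = 0 :=
  sum_eq_zero fun u hu => by
    simp only [mem_Icc] at hu
    exact hf u (by omega) (by omega)

end Vanishing

def sumBelow (k : ℕ) (a : ℕ → ℤ) (i : ℕ) : ℤ := ∑ u ∈ Icc (k + 1 - i) (k - 1), a u

theorem sumBelow_one {k : ℕ} (a : ℕ → ℤ) (hk : 1 ≤ k) : sumBelow k a 1 = 0 :=
  sum_eq_zero fun u hu => by simp only [mem_Icc] at hu; omega

theorem sumBelow_succ {k : ℕ} (a : ℕ → ℤ) {i : ℕ} (h1 : 1 ≤ i) (hik : i < k) :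
    sumBelow k a (i + 1) = a (k - i) + sumBelow k a i := by
  rw [sumBelow, sumBelow, show k + 1 - (i + 1) = k - i by omega,
    ← insert_Icc_add_one_left_eq_Icc (by omega : k - i ≤ k - 1),
    sum_insert (by simp only [mem_Icc]; omega), show k - i + 1 = k + 1 - i by omega]

section SupportedBelow

variable {n k : ℕ} {a : ℕ → ℤ} (hkn : k ≤ n - 2)
  (h0 : ∀ u, k ≤ u → u ≤ n → a u = 0)
include hkn h0

theorem MD_eq_sumBelow : MD n k a = sumBelow k a k + k + 2 * ((n : ℤ) - k) - 2 := by
  rw [MD, sum_Icc_eq_zero_of_vanish h0 le_self_add (Nat.sub_le n 2),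
    sum_Icc_eq_sum_Icc_pred_of_vanish h0 1 (by omega) le_rfl, sumBelow,
    show k + 1 - k = 1 by omega]
  ring

theorem mem_SD_of_mem_block {i : ℕ} (h1 : 1 ≤ i) (hik : i ≤ k) {l : ℤ}
    (hl : l ∈ Set.Icc (sumBelow k a i + i) (sumBelow k a i + i + 2 * ((n : ℤ) - k) - 2)) :
    (l : ℚ) ∈ SD n k a := by
  have h0' : ∀ u, k ≤ u → u ≤ n → (a u : ℚ) = 0 := fun u hu hu' => by
    rw [h0 u hu hu', Int.cast_zero]
  have hS : ∑ u ∈ Icc (k + 1 - i) (k - 1), (a u : ℚ) = sumBelow k a i := by simp [sumBelow]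
  obtain ⟨hl1, hl2⟩ := hl
  rcases le_or_gt l (sumBelow k a i + i + ((n : ℤ) - k) - 1) with hlow | hhigh
  · obtain ⟨j, hj⟩ : ∃ j : ℕ, (j : ℤ) = l - sumBelow k a i - i + 1 :=
      ⟨_, Int.toNat_of_nonneg (by omega)⟩
    refine Or.inl (Or.inl ⟨i, j, h1, hik, by omega, by omega, ?_⟩)
    rw [sum_Icc_eq_sum_Icc_pred_of_vanish h0' _ (by omega) (by omega), hS]
    exact_mod_cast (by omega : l = sumBelow k a i + i + j - 1)
  · obtain ⟨j, hj⟩ : ∃ j : ℕ, (j : ℤ) = l - sumBelow k a i - i - ((n : ℤ) - k) + 2 :=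
      ⟨_, Int.toNat_of_nonneg (by omega)⟩
    refine Or.inl (Or.inr ⟨i, j, h1, hik, by omega, by omega, ?_⟩)
    rw [sum_Icc_eq_sum_Icc_pred_of_vanish h0' _ (by omega) (by omega), hS,
      sum_Icc_eq_zero_of_vanish h0' (by omega) le_rfl, add_zero]
    exact_mod_cast (by omega : l = sumBelow k a i + n - k + i + j - 2)

theorem mem_SD_pair {i j : ℕ} (h1 : 1 ≤ i) (hij : i < j) (hjk : j ≤ k) :
    (((sumBelow k a i + sumBelow k a j + i + j + 2 * n - 2 * k - 2 : ℤ) : ℚ) / 2)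
      ∈ SD n k a := by
  have h0' : ∀ u, k ≤ u → u ≤ n → (a u : ℚ) = 0 := fun u hu hu' => by
    rw [h0 u hu hu', Int.cast_zero]
  refine Or.inr ⟨i, j, h1, hij, hjk, ?_⟩
  rw [sum_Icc_eq_sum_Icc_pred_of_vanish h0' _ (by omega) (by omega),
    sum_Icc_eq_sum_Icc_pred_of_vanish h0' _ (by omega) le_rfl]
  simp [sumBelow]

theorem Icc_between_blocks_subset_SD {i : ℕ} (h1 : 1 ≤ i) (hik : i < k)
    (ha : a (k - i) ≤ 2 * (n : ℤ) - 2 * k - 1) :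
    Set.Icc (sumBelow k a i + i + 2 * ((n : ℤ) - k) - 2)
        (sumBelow k a (i + 1) + ((i + 1 : ℕ) : ℤ)) ⊆ {l : ℤ | (l : ℚ) ∈ SD n k a} := by
  have hsucc := sumBelow_succ a h1 hik
  rintro l ⟨hl1, hl2⟩
  rcases lt_or_ge l (sumBelow k a i + i + 2 * ((n : ℤ) - k) - 1) with hlow | hhigh
  · exact mem_SD_of_mem_block hkn h0 h1 hik.le ⟨by omega, by omega⟩
  rcases eq_or_lt_of_le hl2 with hend | hmid
  · exact mem_SD_of_mem_block hkn h0 (i := i + 1) (by omega) hik ⟨hend.ge, by omega⟩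
  show (l : ℚ) ∈ SD n k a
  convert mem_SD_pair hkn h0 h1 i.lt_add_one hik using 1
  rw [eq_div_iff two_ne_zero]
  exact_mod_cast (by omega : l * 2 = sumBelow k a i + sumBelow k a (i + 1) + i + (i + 1)
    + 2 * n - 2 * k - 2)

end SupportedBelow

theorem cor_D_lt_support_below_general (n k : ℕ) (hk1 : 2 ≤ k) (hkn : k ≤ n - 2)
    (a : ℕ → ℤ) (h0 : ∀ u, k ≤ u → u ≤ n → a u = 0)
    (hb : ∀ u, 1 ≤ u → u ≤ k - 1 →
      0 ≤ a u ∧ a u ≤ 2 * (n : ℤ) - 2 * (k : ℤ) - 1) :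
    ∀ l : ℤ, 1 ≤ l → l ≤ MD n k a → (l : ℚ) ∈ SD n k a := by
  intro l hl1 hl2
  have hcover := Set.Icc_subset_of_chain (X := {l : ℤ | (l : ℚ) ∈ SD n k a})
    (fun i => sumBelow k a (i + 1) + ((i + 1 : ℕ) : ℤ))
    (fun i => sumBelow k a (i + 1) + ((i + 1 : ℕ) : ℤ) + 2 * ((n : ℤ) - k) - 2) (k - 1)
    (fun i hi => fun _ hl => mem_SD_of_mem_block hkn h0 (by omega) (by omega) hl)
    (fun i hi => Icc_between_blocks_subset_SD hkn h0 (by omega) (by omega)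
      (hb (k - (i + 1)) (by omega) (by omega)).2)
  have hk : 1 ≤ k := by omega
  simp only [zero_add, sumBelow_one a hk, Nat.sub_add_cancel hk] at hcover
  exact hcover ⟨by simpa using hl1, by rwa [← MD_eq_sumBelow hkn h0]⟩

/-- Corollary 3.17(1) for `Dₙ/P(α_k)`: if the highest weight is supported below `k`
with coefficients at most `2n-2k-1`, then every integer in `[1, M^D_{k,a}]` is an
entry of the step matrix. -/
theorem cor_D_lt_support_below (n k : ℕ) (hn : 4 ≤ n) (hk1 : 2 ≤ k) (hkn : k ≤ n - 2)
    (a : ℕ → ℤ) (h0 : ∀ u, k ≤ u → u ≤ n → a u = 0)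
    (hb : ∀ u, 1 ≤ u → u ≤ k - 1 →
      0 ≤ a u ∧ a u ≤ 2 * (n : ℤ) - 2 * (k : ℤ) - 1) :
    ∀ l : ℤ, 1 ≤ l → l ≤ MD n k a → (l : ℚ) ∈ SD n k a :=
  cor_D_lt_support_below_general n k hk1 hkn a h0 hb
end

section
/- (Combinatorial content of Corollary 3.17(2), type D, highest weight supported above k.) Let n ≥ 4 and 2 ≤ k ≤ n−2, and let a_1,…,a_n be nonnegative integers with a_u = 0 for all 1 ≤ u ≤ k. Then every integer l with 1 ≤ l ≤ M^D_{k,a} belongs to the step-matrix entry set S^D_{k,a} if and only if a_i ≤ k−1 for all k+1 ≤ i ≤ n−2 and moreover either (a_{n−1} ≤ k−1 and 0 ≤ a_n − a_{n−1} ≤ 2k−1) or (a_n ≤ k−1 and 0 ≤ a_{n−1} − a_n ≤ 2k−1). -/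
open Finset

/-!
Write `P j = a_{k+1} + ⋯ + a_{k+j}` and `f j = P j + j + 1`. Since `a_u = 0` for `u ≤ k`, the
integer entries of the step matrix are the runs `[f j, f j + k)` for `j ≤ n - k - 1`, their
mirror images under `l ↦ M + 1 - l`, and the `l` with `|2 l - (M + 1)| ≤ k - 2`. The runs with
`j ≤ n - k - 2` fill `[1, f (n - k - 2))` exactly when consecutive starts are at most `k` apart,
i.e. `a_i ≤ k - 1` for `k < i ≤ n - 2`, and by the mirror symmetry the same runs fill the top of
`[1, M]`. In the window left between the two chains only the last run (shifted by `a_{n-1}`), its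
mirror image (shifted by `a_n`) and the middle block can occur, and covering that window is a
linear condition on `a_{n-1}`, `a_n` and `k`.
-/

theorem exists_le_lt_add_of_step_le {α : Type*} [LinearOrder α] [Add α] {f : ℕ → α}
    {k l : α} {J : ℕ} (hf : ∀ j < J, f (j + 1) ≤ f j + k) (h0 : f 0 ≤ l)
    (hJ : l < f J + k) :
    ∃ j ≤ J, f j ≤ l ∧ l < f j + k := by
  induction J with
  | zero => exact ⟨0, le_rfl, h0, hJ⟩
  | succ J ih =>
    obtain hl | hl := le_or_gt (f (J + 1)) l
    · exact ⟨J + 1, le_rfl, hl, hJ⟩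
    · obtain ⟨j, hj, hjl⟩ :=
        ih (fun j hj => hf j (by omega)) (hl.trans_le (hf J J.lt_succ_self))
      exact ⟨j, hj.trans J.le_succ, hjl⟩

theorem forall_exists_le_lt_add_iff {f : ℕ → ℤ} {k : ℤ} {r : ℕ}
    (hf : MonotoneOn f (Set.Iic r)) (hk : 0 ≤ k) :
    (∀ l, f 0 ≤ l → l < f r → ∃ j ≤ r, f j ≤ l ∧ l < f j + k) ↔
      ∀ j < r, f (j + 1) ≤ f j + k := by
  have hle {i j : ℕ} (hij : i ≤ j) (hj : j ≤ r) : f i ≤ f j :=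
    hf (Set.mem_Iic.2 (hij.trans hj)) (Set.mem_Iic.2 hj) hij
  refine ⟨fun hcov j hj => ?_,
    fun hstep l h0 hl => exists_le_lt_add_of_step_le hstep h0 (by omega)⟩
  by_contra! hgap
  have h0j := hle j.zero_le hj.le
  have hjr := hle (show j + 1 ≤ r from hj) le_rfl
  obtain ⟨i, hi, hil, hli⟩ := hcov (f (j + 1) - 1) (by omega) (by omega)
  obtain hij | hji := le_or_gt i j
  · have := hle hij hj.le
    omega
  · have := hle (show j + 1 ≤ i from hji) hi
    omega

/-- The window between the two chains, shifted to start at `0`; `c = a_{n-1}` and `d = a_n`. -/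
theorem forall_window_iff {k c d : ℤ} (hc : 0 ≤ c) (hd : 0 ≤ d) :
    (∀ t, k - 1 ≤ t → t ≤ c + d →
        (c ≤ t ∧ t < c + k) ∨ (d ≤ t ∧ t < d + k) ∨
          (c + d + 1 ≤ 2 * t ∧ 2 * t ≤ c + d + 2 * k - 3)) ↔
      (c ≤ k - 1 ∧ 0 ≤ d - c ∧ d - c ≤ 2 * k - 1) ∨
        (d ≤ k - 1 ∧ 0 ≤ c - d ∧ c - d ≤ 2 * k - 1) := by
  refine ⟨fun h => ?_, fun h t ht1 ht2 => by omega⟩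
  -- `k - 1` is missed when `c, d ≥ k`, and `d - 1` when `d - c ≥ 2k` (symmetrically `c - 1`).
  have h1 := h (k - 1)
  have h2 := h (c - 1)
  have h3 := h (d - 1)
  omega

/-- Integer form of `SD`: its second family is the mirror image of the first under
`l ↦ M + 1 - l`. -/
def stepEntrySet (f : ℕ → ℤ) (r : ℕ) (k M : ℤ) : Set ℤ :=
  {l | ∃ j ≤ r + 1, f j ≤ l ∧ l < f j + k} ∪
    {l | ∃ j ≤ r + 1, f j ≤ M + 1 - l ∧ M + 1 - l < f j + k} ∪
    {l | M + 3 ≤ 2 * l + k ∧ 2 * l ≤ M + k - 1}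

theorem forall_mem_stepEntrySet_iff {f : ℕ → ℤ} {r : ℕ} {k c d M : ℤ}
    (hf : MonotoneOn f (Set.Iic (r + 1))) (hf0 : f 0 = 1) (hk : 0 ≤ k)
    (hc : f (r + 1) = f r + c + 1) (hc0 : 0 ≤ c) (hd : 0 ≤ d)
    (hM : M = f r + f (r + 1) + d + k - 1) :
    (∀ l, 1 ≤ l → l ≤ M → l ∈ stepEntrySet f r k M) ↔
      (∀ j < r, f (j + 1) ≤ f j + k) ∧
        ((c ≤ k - 1 ∧ 0 ≤ d - c ∧ d - c ≤ 2 * k - 1) ∨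
          (d ≤ k - 1 ∧ 0 ≤ c - d ∧ c - d ≤ 2 * k - 1)) := by
  have hle (j : ℕ) (hj : j ≤ r + 1) : j = r + 1 ∨ j ≤ r ∧ f j ≤ f r := by
    obtain rfl | hj := eq_or_lt_of_le hj
    · exact .inl rfl
    · have hjr := Nat.lt_succ_iff.1 hj
      exact .inr ⟨hjr, hf (Set.mem_Iic.2 hj.le) (Set.mem_Iic.2 r.le_succ) hjr⟩
  have hfr : 1 ≤ f r := hf0 ▸ hf (by simp) (Set.mem_Iic.2 r.le_succ) r.zero_le
  simp only [stepEntrySet, Set.mem_union, Set.mem_ofPred_eq]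
  constructor
  · intro hcov
    constructor
    · rw [← forall_exists_le_lt_add_iff (hf.mono (Set.Iic_subset_Iic.2 r.le_succ)) hk]
      intro l h0 hl
      rcases hcov l (by omega) (by omega) with (⟨j, hj, hjl⟩ | ⟨j, hj, hjl⟩) | hmid
      · rcases hle j hj with rfl | ⟨hj', -⟩
        · omega
        · exact ⟨j, hj', hjl⟩
      · rcases hle j hj with rfl | hj' <;> omega
      · omega
    · rw [← forall_window_iff hc0 hd]
      intro t ht1 ht2
      rcases hcov (f r + 1 + t) (by omega) (by omega) with
        (⟨j, hj, hjl⟩ | ⟨j, hj, hjl⟩) | hmid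
      · rcases hle j hj with rfl | hj' <;> omega
      · rcases hle j hj with rfl | hj' <;> omega
      · omega
  · rintro ⟨hstep, hfork⟩ l hl1 hlM
    by_cases hlow : l < f r + k
    · obtain ⟨j, hj, hjl⟩ := exists_le_lt_add_of_step_le hstep (by omega) hlow
      exact .inl (.inl ⟨j, by omega, hjl⟩)
    by_cases hhigh : M + 1 - l < f r + k
    · obtain ⟨j, hj, hjl⟩ := exists_le_lt_add_of_step_le hstep (by omega) hhigh
      exact .inl (.inr ⟨j, by omega, hjl⟩)
    rcases (forall_window_iff hc0 hd).2 hfork (l - f r - 1) (by omega) (by omega) with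
      hlc | hld | hmid
    · exact .inl (.inl ⟨r + 1, le_rfl, by omega⟩)
    · exact .inl (.inr ⟨r + 1, le_rfl, by omega⟩)
    · exact .inr (by omega)

def partialSum (k : ℕ) (a : ℕ → ℤ) (j : ℕ) : ℤ := ∑ u ∈ Ico (k + 1) (k + 1 + j), a u

section partialSum

variable {k : ℕ} {a : ℕ → ℤ}

theorem partialSum_succ (j : ℕ) : partialSum k a (j + 1) = partialSum k a j + a (k + 1 + j) :=
  sum_Ico_succ_top (Nat.le_add_right (k + 1) j) a

theorem sum_Icc_eq_partialSum_sub {i j : ℕ} (hij : i ≤ j) :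
    ∑ u ∈ Icc (k + 1 + i) (k + j), a u = partialSum k a j - partialSum k a i := by
  rw [← Ico_add_one_right_eq_Icc, eq_sub_iff_add_eq', partialSum, partialSum,
    show k + j + 1 = k + 1 + j by omega]
  exact sum_Ico_consecutive a (by omega) (by omega)

theorem sum_Icc_eq_partialSum (h0 : ∀ u, 1 ≤ u → u ≤ k → a u = 0) {i : ℕ} (hi : i ≤ k)
    (j : ℕ) : ∑ u ∈ Icc (k + 1 - i) (k + j), a u = partialSum k a j := by
  rw [← Ico_add_one_right_eq_Icc, show k + j + 1 = k + 1 + j by omega,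
    ← sum_Ico_consecutive a (show k + 1 - i ≤ k + 1 by omega) (by omega), partialSum,
    add_eq_right]
  refine sum_eq_zero fun u hu => ?_
  rw [mem_Ico] at hu
  exact h0 u (by omega) (by omega)

theorem monotoneOn_partialSum {R : ℕ} (ha : ∀ u, k + 1 ≤ u → u ≤ k + R → 0 ≤ a u) :
    MonotoneOn (partialSum k a) (Set.Iic R) := by
  intro i hi j hj hij
  rw [← sub_nonneg, ← sum_Icc_eq_partialSum_sub hij]
  refine sum_nonneg fun u hu => ?_
  rw [mem_Icc] at hu
  exact ha u (by omega) (by have := Set.mem_Iic.1 hj; omega)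

end partialSum

theorem MD_eq {k r : ℕ} {a : ℕ → ℤ} (h0 : ∀ u, 1 ≤ u → u ≤ k → a u = 0) :
    MD (k + r + 2) k a = partialSum k a r + partialSum k a (r + 2) + 2 * r + k + 2 := by
  rw [MD, show Icc 1 (k + r + 2) = Icc (k + 1 - k) (k + (r + 2)) by congr 1; omega,
    show Icc (k + 1) (k + r + 2 - 2) = Icc (k + 1 - 0) (k + r) from rfl,
    sum_Icc_eq_partialSum h0 le_rfl, sum_Icc_eq_partialSum h0 (Nat.zero_le k)]
  push_cast
  ring

theorem exists_add_eq_of_three_le {k : ℕ} {s : ℤ} (h3 : 3 ≤ s) (hs : s ≤ 2 * k - 1) :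
    ∃ i j : ℕ, 1 ≤ i ∧ i < j ∧ j ≤ k ∧ (i + j : ℤ) = s := by
  by_cases hsk : s ≤ k + 1
  · exact ⟨1, (s - 1).toNat, le_rfl, by omega, by omega, by omega⟩
  · exact ⟨(s - k).toNat, k, by omega, by omega, le_rfl, by omega⟩

section SD

variable {k r : ℕ} {a : ℕ → ℤ}

theorem sum_Icc_intCast_eq_partialSum (h0 : ∀ u, 1 ≤ u → u ≤ k → a u = 0) {i : ℕ}
    (hi : i ≤ k) (j : ℕ) :
    ∑ u ∈ Icc (k + 1 - i) (k + j), (a u : ℚ) = partialSum k a j := by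
  rw [← Int.cast_sum, sum_Icc_eq_partialSum h0 hi]

theorem sum_Icc_top_intCast_eq {j : ℕ} (hj : j ≤ r + 2) :
    ∑ u ∈ Icc (k + r + 2 + 1 - j) (k + r + 2), (a u : ℚ) =
      partialSum k a (r + 2) - partialSum k a (r + 2 - j) := by
  rw [← Int.cast_sum, show k + r + 2 + 1 - j = k + 1 + (r + 2 - j) by omega,
    show k + r + 2 = k + (r + 2) by omega, sum_Icc_eq_partialSum_sub (by omega)]
  push_cast
  ring

theorem mem_stepEntrySet_of_intCast_mem_SD (h0 : ∀ u, 1 ≤ u → u ≤ k → a u = 0) {l : ℤ}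
    (hl : (l : ℚ) ∈ SD (k + r + 2) k a) :
    l ∈ stepEntrySet (fun j => partialSum k a j + j + 1) r k (MD (k + r + 2) k a) := by
  have hM := MD_eq (r := r) h0
  simp only [SD, Set.mem_union, Set.mem_ofPred_eq] at hl
  simp only [stepEntrySet, Set.mem_union, Set.mem_ofPred_eq]
  rcases hl with (⟨i, j, hi1, hik, hj1, hjr, hl⟩ | ⟨i, j, hi1, hik, hj1, hjr, hl⟩) |
    ⟨i, j, hi1, hij, hjk, hl⟩
  · obtain ⟨j, rfl⟩ := Nat.exists_eq_add_of_le' hj1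
    rw [show k + (j + 1) - 1 = k + j by omega, sum_Icc_intCast_eq_partialSum h0 hik] at hl
    have hl' : l = partialSum k a j + i + (j + 1) - 1 := by exact_mod_cast hl
    exact .inl (.inl ⟨j, by omega, by omega, by omega⟩)
  · rw [show k + r + 2 - 2 = k + r by omega, sum_Icc_intCast_eq_partialSum h0 hik,
      sum_Icc_top_intCast_eq (by omega)] at hl
    have hl' : l = partialSum k a r + (partialSum k a (r + 2) - partialSum k a (r + 2 - j)) +
        (k + r + 2 : ℕ) - k + i + j - 2 := by exact_mod_cast hl
    exact .inl (.inr ⟨r + 2 - j, by omega, by omega, by omega⟩)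
  · rw [show k + r + 2 - 2 = k + r by omega, show k + r + 2 = k + (r + 2) by omega,
      sum_Icc_intCast_eq_partialSum h0 (by omega), sum_Icc_intCast_eq_partialSum h0 hjk,
      eq_div_iff two_ne_zero] at hl
    have hl' : l * 2 = partialSum k a r + partialSum k a (r + 2) + i + j +
        2 * (k + (r + 2) : ℕ) - 2 * k - 2 := by exact_mod_cast hl
    exact .inr ⟨by omega, by omega⟩

theorem intCast_mem_SD_of_mem_stepEntrySet (h0 : ∀ u, 1 ≤ u → u ≤ k → a u = 0) {l : ℤ}
    (hl : l ∈ stepEntrySet (fun j => partialSum k a j + j + 1) r k (MD (k + r + 2) k a)) :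
    (l : ℚ) ∈ SD (k + r + 2) k a := by
  have hM := MD_eq (r := r) h0
  simp only [stepEntrySet, Set.mem_union, Set.mem_ofPred_eq] at hl
  simp only [SD, Set.mem_union, Set.mem_ofPred_eq]
  rcases hl with (⟨j, hj, hjl⟩ | ⟨j, hj, hjl⟩) | hmid
  · obtain ⟨i, hi⟩ := Int.eq_ofNat_of_zero_le (show 0 ≤ l - partialSum k a j - j by omega)
    refine .inl (.inl ⟨i, j + 1, by omega, by omega, by omega, by omega, ?_⟩)
    rw [show k + (j + 1) - 1 = k + j by omega, sum_Icc_intCast_eq_partialSum h0 (by omega)]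
    exact_mod_cast (show l = partialSum k a j + i + (j + 1 : ℕ) - 1 by omega)
  · obtain ⟨i, hi⟩ := Int.eq_ofNat_of_zero_le
      (show 0 ≤ partialSum k a j + j + 1 + k - (MD (k + r + 2) k a + 1 - l) by omega)
    refine .inl (.inr ⟨i, r + 2 - j, by omega, by omega, by omega, by omega, ?_⟩)
    rw [show k + r + 2 - 2 = k + r by omega, sum_Icc_intCast_eq_partialSum h0 (by omega),
      sum_Icc_top_intCast_eq (by omega), show r + 2 - (r + 2 - j) = j by omega]
    exact_mod_cast (show l = partialSum k a r + (partialSum k a (r + 2) - partialSum k a j) +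
      (k + r + 2 : ℕ) - k + i + (r + 2 - j : ℕ) - 2 by omega)
  · obtain ⟨i, j, hi1, hij, hjk, hs⟩ := exists_add_eq_of_three_le (k := k)
      (s := 2 * l - partialSum k a r - partialSum k a (r + 2) - 2 * r - 2) (by omega) (by omega)
    refine .inr ⟨i, j, hi1, hij, hjk, ?_⟩
    rw [show k + r + 2 - 2 = k + r by omega, show k + r + 2 = k + (r + 2) by omega,
      sum_Icc_intCast_eq_partialSum h0 (by omega), sum_Icc_intCast_eq_partialSum h0 hjk,
      eq_div_iff two_ne_zero]
    exact_mod_cast (show l * 2 = partialSum k a r + partialSum k a (r + 2) + i + j +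
      2 * (k + (r + 2) : ℕ) - 2 * k - 2 by omega)

theorem intCast_mem_SD_iff (h0 : ∀ u, 1 ≤ u → u ≤ k → a u = 0) (l : ℤ) :
    (l : ℚ) ∈ SD (k + r + 2) k a ↔
      l ∈ stepEntrySet (fun j => partialSum k a j + j + 1) r k (MD (k + r + 2) k a) :=
  ⟨mem_stepEntrySet_of_intCast_mem_SD h0, intCast_mem_SD_of_mem_stepEntrySet h0⟩

end SD

theorem cor_D_lt_support_above_general (n k : ℕ) (hn : 4 ≤ n) (hkn : k ≤ n - 2)
    (a : ℕ → ℤ) (ha : ∀ u, 1 ≤ u → u ≤ n → 0 ≤ a u)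
    (h0 : ∀ u, 1 ≤ u → u ≤ k → a u = 0) :
    (∀ l : ℤ, 1 ≤ l → l ≤ MD n k a → (l : ℚ) ∈ SD n k a) ↔
      ((∀ i, k + 1 ≤ i → i ≤ n - 2 → a i ≤ (k : ℤ) - 1) ∧
        ((a (n - 1) ≤ (k : ℤ) - 1 ∧ 0 ≤ a n - a (n - 1) ∧
            a n - a (n - 1) ≤ 2 * (k : ℤ) - 1) ∨
          (a n ≤ (k : ℤ) - 1 ∧ 0 ≤ a (n - 1) - a n ∧
            a (n - 1) - a n ≤ 2 * (k : ℤ) - 1))) := by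
  obtain ⟨r, rfl⟩ : ∃ r, n = k + r + 2 := ⟨n - k - 2, by omega⟩
  have hP := monotoneOn_partialSum (k := k) (R := r + 1) fun u hu1 hu2 => ha u (by omega) (by omega)
  have hf : MonotoneOn (fun j => partialSum k a j + j + 1) (Set.Iic (r + 1)) :=
    fun i hi j hj hij => by have := hP hi hj hij; simp only; omega
  have hc : partialSum k a (r + 1) = partialSum k a r + a (k + r + 1) := by
    rw [partialSum_succ, Nat.add_right_comm]
  have hd : partialSum k a (r + 2) = partialSum k a (r + 1) + a (k + r + 2) := by
    rw [partialSum_succ, show k + 1 + (r + 1) = k + r + 2 by omega]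
  simp only [intCast_mem_SD_iff h0]
  rw [forall_mem_stepEntrySet_iff hf (by simp [partialSum]) (by omega)
    (by simp only [hc]; push_cast; ring) (ha (k + r + 1) (by omega) (by omega))
    (ha (k + r + 2) (by omega) (by omega))
    (by rw [MD_eq h0, hd, hc]; push_cast; ring)]
  refine and_congr ⟨fun h i hi1 hi2 => ?_, fun h j hj => ?_⟩ Iff.rfl
  · have := h (i - k - 1) (by omega)
    rw [partialSum_succ, show k + 1 + (i - k - 1) = i by omega] at this
    omega
  · have := h (k + 1 + j) (by omega) (by omega)
    simp only [partialSum_succ]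
    omega

/-- Corollary 3.17(2) for `Dₙ/P(α_k)`: for a highest weight supported above `k`,
every integer in `[1, M^D_{k,a}]` is an entry of the step matrix iff
`a_i ≤ k-1` for `k+1 ≤ i ≤ n-2` together with one of the two boundary conditions
on `a_{n-1}, a_n`. -/
theorem cor_D_lt_support_above (n k : ℕ) (hn : 4 ≤ n) (hk1 : 2 ≤ k) (hkn : k ≤ n - 2)
    (a : ℕ → ℤ) (ha : ∀ u, 1 ≤ u → u ≤ n → 0 ≤ a u)
    (h0 : ∀ u, 1 ≤ u → u ≤ k → a u = 0) :
    (∀ l : ℤ, 1 ≤ l → l ≤ MD n k a → (l : ℚ) ∈ SD n k a) ↔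
      ((∀ i, k + 1 ≤ i → i ≤ n - 2 → a i ≤ (k : ℤ) - 1) ∧
        ((a (n - 1) ≤ (k : ℤ) - 1 ∧ 0 ≤ a n - a (n - 1) ∧
            a n - a (n - 1) ≤ 2 * (k : ℤ) - 1) ∨
          (a n ≤ (k : ℤ) - 1 ∧ 0 ≤ a (n - 1) - a n ∧
            a (n - 1) - a n ≤ 2 * (k : ℤ) - 1))) :=
  cor_D_lt_support_above_general n k hn hkn a ha h0
end

section
/- (Combinatorial content of Corollary 3.18(1), type D, k = n.) Let n ≥ 5 and let a_1,…,a_n be integers with a_1 = a_2 = a_{n−2} = a_{n−1} = a_n = 0 and 0 ≤ a_u ≤ 1 for all 3 ≤ u ≤ n−3. Then every integer l with 1 ≤ l ≤ M^D_{n,a} = 2Σ_{u=3}^{n−3} a_u + 2n − 3 belongs to the step-matrix entry set S^D_{n,a}. -/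
/-! The entry of `S^D_{n,a}` indexed by `(i, j)` is `F i + F j - 2`, where
`F m = ∑_{u=n+1-m}^{n} a_u + m` (the truncation of the second sum at `n - 2` is harmless because
`a_{n-1} = a_n = 0`). Under the hypotheses `F` starts `1, 2, 3`, ends `A + n - 2, A + n - 1, A + n`
with `A = ∑_{u=3}^{n-3} a_u`, and increases by `1` or `2` at each step. For such a sequence
every target `s` is within `1` of some value `F p`, so a small value `s` is reached as
`F 1 + F p` or `F 2 + F p`; reversing the sequence, a large one as `F p + F n` or
`F p + F (n - 1)`. -/

open Finset

/-- The step-matrix entry set `S^D_{n,a}` (the case `k = n`). -/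
def SDn (n : ℕ) (a : ℕ → ℤ) : Set ℚ :=
  {x | ∃ i j : ℕ, 1 ≤ i ∧ i < j ∧ j ≤ n ∧
    x = (∑ u ∈ Icc (n + 1 - i) n, (a u : ℚ))
      + (∑ u ∈ Icc (n + 1 - j) (n - 2), (a u : ℚ)) + i + j - 2}

def StepsOneOrTwo (F : ℕ → ℤ) (n : ℕ) : Prop :=
  ∀ m, 1 ≤ m → m < n → F m < F (m + 1) ∧ F (m + 1) ≤ F m + 2

namespace StepsOneOrTwo

variable {F : ℕ → ℤ} {n : ℕ}

theorem exists_mem_Icc (hF : StepsOneOrTwo F n) (hn : 1 ≤ n) {v : ℤ} (h1 : F 1 ≤ v)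
    (hv : v ≤ F n) : ∃ p, 1 ≤ p ∧ p ≤ n ∧ v ≤ F p ∧ F p ≤ v + 1 := by
  induction n, hn using Nat.le_induction generalizing v with
  | base => exact ⟨1, le_rfl, le_rfl, hv, by omega⟩
  | succ m hm ih =>
    have hFm : StepsOneOrTwo F m := fun k hk hkm => hF k hk (by omega)
    rcases le_or_gt v (F m) with hvm | hvm
    · obtain ⟨p, hp1, hpm, hp⟩ := ih hFm h1 hvm
      exact ⟨p, hp1, by omega, hp⟩
    · have := hF m hm (by omega)
      exact ⟨m + 1, by omega, le_rfl, hv, by omega⟩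

theorem reverse (hF : StepsOneOrTwo F n) : StepsOneOrTwo (fun m => -F (n + 1 - m)) n := by
  intro m hm hmn
  have hnm : n + 1 - m = n - m + 1 := by omega
  have hnm' : n + 1 - (m + 1) = n - m := by omega
  have := hF (n - m) (by omega) (by omega)
  simp only [hnm, hnm']
  omega

theorem exists_add_eq_of_le_add_one (hF : StepsOneOrTwo F n) (hn : 3 ≤ n)
    (h2 : F 2 = F 1 + 1) (h3 : F 3 = F 1 + 2) {s : ℤ} (hs1 : 2 * F 1 + 1 ≤ s)
    (hs2 : s ≤ F 1 + F n + 1) : ∃ i j, 1 ≤ i ∧ i < j ∧ j ≤ n ∧ F i + F j = s := by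
  obtain ⟨p, hp1, hpn, hvp, hpv⟩ := hF.exists_mem_Icc (by omega) (v := s - F 1 - 1)
    (by omega) (by omega)
  rcases (show F p = s - F 1 ∨ F p = s - F 1 - 1 by omega) with hp | hp
  · exact ⟨1, p, le_rfl, lt_of_le_of_ne hp1 (by rintro rfl; omega), hpn, by omega⟩
  · rcases (show p = 1 ∨ p = 2 ∨ 2 < p by omega) with rfl | rfl | h
    · exact ⟨1, 2, le_rfl, one_lt_two, by omega, by omega⟩
    · exact ⟨1, 3, le_rfl, by norm_num, hn, by omega⟩
    · exact ⟨2, p, one_le_two, h, hpn, by omega⟩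

theorem exists_add_eq_of_add_sub_one_le (hF : StepsOneOrTwo F n) (hn : 3 ≤ n)
    (h2 : F (n - 1) = F n - 1) (h3 : F (n - 2) = F n - 2) {s : ℤ}
    (hs1 : F 1 + F n - 1 ≤ s) (hs2 : s ≤ 2 * F n - 1) :
    ∃ i j, 1 ≤ i ∧ i < j ∧ j ≤ n ∧ F i + F j = s := by
  have e1 : n + 1 - 1 = n := by omega
  have e2 : n + 1 - 2 = n - 1 := by omega
  have e3 : n + 1 - 3 = n - 2 := by omega
  have e4 : n + 1 - n = 1 := by omega
  obtain ⟨i, j, hi, hij, hjn, hij_sum⟩ := hF.reverse.exists_add_eq_of_le_add_one hn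
    (s := -s) (by simp only [e2, e1]; omega) (by simp only [e3, e1]; omega)
    (by simp only [e1]; omega) (by simp only [e1, e4]; omega)
  exact ⟨n + 1 - j, n + 1 - i, by omega, by omega, by omega, by omega⟩

theorem exists_add_eq (hF : StepsOneOrTwo F n) (hn : 3 ≤ n)
    (h2 : F 2 = F 1 + 1) (h3 : F 3 = F 1 + 2)
    (hn1 : F (n - 1) = F n - 1) (hn2 : F (n - 2) = F n - 2) {s : ℤ}
    (hs1 : F 1 + F 2 ≤ s) (hs2 : s ≤ F (n - 1) + F n) :
    ∃ i j, 1 ≤ i ∧ i < j ∧ j ≤ n ∧ F i + F j = s := by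
  rcases le_or_gt s (F 1 + F n + 1) with hs | hs
  · exact hF.exists_add_eq_of_le_add_one hn h2 h3 (by omega) hs
  · exact hF.exists_add_eq_of_add_sub_one_le hn hn1 hn2 (by omega) (by omega)

end StepsOneOrTwo

def tailWeight (n : ℕ) (a : ℕ → ℤ) (m : ℕ) : ℤ := ∑ u ∈ Icc (n + 1 - m) n, a u + m

section tailWeight

variable {n : ℕ} {a : ℕ → ℤ}

theorem tailWeight_zero : tailWeight n a 0 = 0 := by
  simp [tailWeight]

theorem tailWeight_succ {m : ℕ} (hm : m ≤ n) :
    tailWeight n a (m + 1) = tailWeight n a m + a (n - m) + 1 := by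
  have e1 : n + 1 - (m + 1) = n - m := by omega
  have e2 : n + 1 - m = n - m + 1 := by omega
  rw [tailWeight, tailWeight, e1, e2, ← insert_Icc_add_one_left_eq_Icc (Nat.sub_le n m),
    sum_insert (by simp)]
  push_cast
  ring

theorem tailWeight_self (h1 : a 1 = 0) (h2 : a 2 = 0) (hn2 : a (n - 2) = 0)
    (hn1 : a (n - 1) = 0) (hnn : a n = 0) :
    tailWeight n a n = ∑ u ∈ Icc 3 (n - 3), a u + n := by
  have hsum : ∑ u ∈ Icc 3 (n - 3), a u = ∑ u ∈ Icc 1 n, a u := by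
    refine sum_subset (Icc_subset_Icc (by omega) (by omega)) fun u hu hu' => ?_
    simp only [mem_Icc, not_and, not_le] at hu hu'
    rcases (show u = 1 ∨ u = 2 ∨ u = n - 2 ∨ u = n - 1 ∨ u = n by omega)
      with rfl | rfl | rfl | rfl | rfl <;> assumption
  simp [tailWeight, hsum]

theorem stepsOneOrTwo_tailWeight (ha : ∀ u, 1 ≤ u → u < n → 0 ≤ a u ∧ a u ≤ 1) :
    StepsOneOrTwo (tailWeight n a) n := by
  intro m hm hmn
  have := ha (n - m) (by omega) (by omega)
  rw [tailWeight_succ hmn.le]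
  omega

theorem mem_SDn_of_tailWeight_add_eq (hn1 : a (n - 1) = 0) (hnn : a n = 0) {i j : ℕ}
    (hi : 1 ≤ i) (hij : i < j) (hjn : j ≤ n) {l : ℤ}
    (hl : tailWeight n a i + tailWeight n a j = l + 2) : (l : ℚ) ∈ SDn n a := by
  refine ⟨i, j, hi, hij, hjn, ?_⟩
  have htrunc : ∑ u ∈ Icc (n + 1 - j) (n - 2), a u = ∑ u ∈ Icc (n + 1 - j) n, a u := by
    refine sum_subset (Icc_subset_Icc_right (by omega)) fun u hu hu' => ?_
    simp only [mem_Icc, not_and, not_le] at hu hu'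
    rcases (show u = n - 1 ∨ u = n by omega) with rfl | rfl <;> assumption
  have hlQ : ((tailWeight n a i + tailWeight n a j : ℤ) : ℚ) = l + 2 := by exact_mod_cast hl
  simp only [tailWeight, ← htrunc] at hlQ
  push_cast at hlQ
  linarith

end tailWeight

/-- Corollary 3.18(1) for `Dₙ/P(αₙ)`: if `a₁ = a₂ = a_{n-2} = a_{n-1} = aₙ = 0` and
`0 ≤ aᵤ ≤ 1` for `3 ≤ u ≤ n-3`, then every integer in
`[1, M^D_{n,a} = 2∑_{u=3}^{n-3} aᵤ + 2n - 3]` is an entry of the step matrix. -/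
theorem cor_D_eq_one (n : ℕ) (hn : 5 ≤ n) (a : ℕ → ℤ)
    (h1 : a 1 = 0) (h2 : a 2 = 0) (hn2 : a (n - 2) = 0) (hn1 : a (n - 1) = 0)
    (hnn : a n = 0)
    (hb : ∀ u, 3 ≤ u → u ≤ n - 3 → 0 ≤ a u ∧ a u ≤ 1) :
    ∀ l : ℤ, 1 ≤ l →
      l ≤ 2 * (∑ u ∈ Icc 3 (n - 3), a u) + 2 * (n : ℤ) - 3 →
      (l : ℚ) ∈ SDn n a := by
  intro l hl1 hl2
  have ha : ∀ u, 1 ≤ u → u < n → 0 ≤ a u ∧ a u ≤ 1 := by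
    intro u hu1 hun
    rcases (show u = 1 ∨ u = 2 ∨ u = n - 2 ∨ u = n - 1 ∨ (3 ≤ u ∧ u ≤ n - 3) by omega)
      with rfl | rfl | rfl | rfl | ⟨hu3, hun3⟩
    · simp [h1]
    · simp [h2]
    · simp [hn2]
    · simp [hn1]
    · exact hb u hu3 hun3
  have hF1 : tailWeight n a 1 = 1 := by
    rw [tailWeight_succ (Nat.zero_le n), tailWeight_zero, Nat.sub_zero, hnn]; rfl
  have hF2 : tailWeight n a 2 = 2 := by
    rw [tailWeight_succ (m := 1) (by omega), hF1, hn1]; rfl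
  have hF3 : tailWeight n a 3 = 3 := by
    rw [tailWeight_succ (m := 2) (by omega), hF2, hn2]; rfl
  have hFn := tailWeight_self h1 h2 hn2 hn1 hnn
  have hFn1 : tailWeight n a n = tailWeight n a (n - 1) + 1 := by
    have := tailWeight_succ (n := n) (a := a) (m := n - 1) (by omega)
    rwa [Nat.sub_add_cancel (by omega), Nat.sub_sub_self (by omega), h1, add_zero] at this
  have hFn2 : tailWeight n a (n - 1) = tailWeight n a (n - 2) + 1 := by
    have := tailWeight_succ (n := n) (a := a) (m := n - 2) (by omega)
    rwa [show n - 2 + 1 = n - 1 by omega, Nat.sub_sub_self (by omega), h2, add_zero] at this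
  obtain ⟨i, j, hi, hij, hjn, hs⟩ := (stepsOneOrTwo_tailWeight ha).exists_add_eq (s := l + 2)
    (by omega) (by omega) (by omega) (by omega) (by omega) (by omega) (by omega)
  exact mem_SDn_of_tailWeight_add_eq hn1 hnn hi hij hjn hs
end

section
/- (Combinatorial content of Corollary 3.18(2), type D, k = n.) Let n ≥ 4 and let a_1,…,a_n be integers with a_u = 0 for all 2 ≤ u ≤ n−2, a_n = 0, 0 ≤ a_1 ≤ n−4, and 0 ≤ a_{n−1} ≤ n−4. Then every integer l with 1 ≤ l ≤ M^D_{n,a} = a_1 + a_{n−1} + 2n − 3 belongs to the step-matrix entry set S^D_{n,a}. -/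
/-! Only `a₁` and `a_{n-1}` can be nonzero, so the entry indexed by `i < j` is
`[2 ≤ i] a_{n-1} + [j = n] a₁ + i + j - 2`. The pairs `(1, j)`, `(2, j)`, `(i, n - 1)` and `(i, n)`
then give four runs of consecutive values, and the bounds `a₁, a_{n-1} ≤ n - 4` are what close
the gaps between consecutive runs. -/

open Finset

section

variable {n : ℕ} {a : ℕ → ℤ}

theorem sum_Icc_eq_of_eq_zero (hn : 3 ≤ n) (h0 : ∀ u, 2 ≤ u → u ≤ n - 2 → a u = 0)
    (hnn : a n = 0) {m N : ℕ} (hm : 1 ≤ m) (hN : N ≤ n) :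
    ∑ u ∈ Icc m N, (a u : ℚ) =
      (if m ≤ 1 ∧ 1 ≤ N then (a 1 : ℚ) else 0)
        + (if m ≤ n - 1 ∧ n - 1 ≤ N then (a (n - 1) : ℚ) else 0) := by
  have hsplit : ∀ u ∈ Icc m N, (a u : ℚ) =
      (if u = 1 then (a 1 : ℚ) else 0) + (if u = n - 1 then (a (n - 1) : ℚ) else 0) := by
    intro u hu
    rw [mem_Icc] at hu
    by_cases hu1 : u = 1
    · subst hu1
      rw [if_pos rfl, if_neg (by omega), add_zero]
    by_cases hu2 : u = n - 1
    · rw [if_neg hu1, if_pos hu2, zero_add, hu2]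
    have : a u = 0 := if hun : u = n then hun ▸ hnn else h0 u (by omega) (by omega)
    simp [hu1, hu2, this]
  rw [sum_congr rfl hsplit, sum_add_distrib, sum_ite_eq', sum_ite_eq']
  simp only [mem_Icc]

theorem entry_mem_SDn (hn : 3 ≤ n) (h0 : ∀ u, 2 ≤ u → u ≤ n - 2 → a u = 0)
    (hnn : a n = 0) {i j : ℕ} (hi : 1 ≤ i) (hij : i < j) (hj : j ≤ n) :
    (((if 2 ≤ i then a (n - 1) else 0) + (if j = n then a 1 else 0) + i + j - 2 : ℤ) : ℚ)
      ∈ SDn n a := by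
  refine ⟨i, j, hi, hij, hj, ?_⟩
  rw [sum_Icc_eq_of_eq_zero hn h0 hnn (by omega) le_rfl,
    sum_Icc_eq_of_eq_zero hn h0 hnn (by omega) (by omega)]
  split_ifs <;> first | omega | (push_cast; ring)

end

theorem exists_entry_eq {n : ℕ} {A B l : ℤ} (hA : A ≤ n - 4) (hB : B ≤ n - 4) (hl : 1 ≤ l)
    (hlM : l ≤ A + B + 2 * n - 3) :
    ∃ i j : ℕ, 1 ≤ i ∧ i < j ∧ j ≤ n ∧
      l = (if 2 ≤ i then B else 0) + (if j = n then A else 0) + i + j - 2 := by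
  by_cases h₁ : l ≤ n - 2
  · refine ⟨1, (l + 1).toNat, le_rfl, by omega, by omega, ?_⟩
    rw [if_neg (by omega), if_neg (by omega)]
    omega
  by_cases h₂ : l ≤ B + n - 1
  · refine ⟨2, (l - B).toNat, by omega, by omega, by omega, ?_⟩
    rw [if_pos le_rfl, if_neg (by omega)]
    omega
  by_cases h₃ : l ≤ B + 2 * n - 5
  · refine ⟨(l - B - n + 3).toNat, n - 1, by omega, by omega, by omega, ?_⟩
    rw [if_pos (by omega), if_neg (by omega)]
    omega
  · refine ⟨(l - A - B - n + 2).toNat, n, by omega, by omega, le_rfl, ?_⟩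
    rw [if_pos (by omega), if_pos rfl]
    omega

theorem cor_D_eq_two_general (n : ℕ) (a : ℕ → ℤ)
    (h0 : ∀ u, 2 ≤ u → u ≤ n - 2 → a u = 0) (hnn : a n = 0)
    (h1 : 0 ≤ a 1 ∧ a 1 ≤ (n : ℤ) - 4)
    (hn1 : 0 ≤ a (n - 1) ∧ a (n - 1) ≤ (n : ℤ) - 4) :
    ∀ l : ℤ, 1 ≤ l →
      l ≤ a 1 + a (n - 1) + 2 * (n : ℤ) - 3 →
      (l : ℚ) ∈ SDn n a := by
  intro l hl hlM
  have hn : 3 ≤ n := by omega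
  obtain ⟨i, j, hi, hij, hj, rfl⟩ := exists_entry_eq h1.2 hn1.2 hl hlM
  exact entry_mem_SDn hn h0 hnn hi hij hj

/-- Corollary 3.18(2) for `Dₙ/P(αₙ)`: if `aᵤ = 0` for `2 ≤ u ≤ n-2`, `aₙ = 0`, and
`0 ≤ a₁, a_{n-1} ≤ n-4`, then every integer in
`[1, M^D_{n,a} = a₁ + a_{n-1} + 2n - 3]` is an entry of the step matrix. -/
theorem cor_D_eq_two (n : ℕ) (hn : 4 ≤ n) (a : ℕ → ℤ)
    (h0 : ∀ u, 2 ≤ u → u ≤ n - 2 → a u = 0) (hnn : a n = 0)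
    (h1 : 0 ≤ a 1 ∧ a 1 ≤ (n : ℤ) - 4)
    (hn1 : 0 ≤ a (n - 1) ∧ a (n - 1) ≤ (n : ℤ) - 4) :
    ∀ l : ℤ, 1 ≤ l →
      l ≤ a 1 + a (n - 1) + 2 * (n : ℤ) - 3 →
      (l : ℚ) ∈ SDn n a :=
  cor_D_eq_two_general n a h0 hnn h1 hn1
end

section
/- (Combinatorial content of the finiteness corollary for type B, k < n: there are only finitely many initialized irreducible homogeneous ACM bundles on B_n/P(α_k).) Fix integers n ≥ 2 and 1 ≤ k ≤ n−1. Then the set of n-tuples (a_1,…,a_n) of nonnegative integers with a_k = 0 such that every integer l with 1 ≤ l ≤ M^B_{k,a} belongs to the step-matrix entry set S^B_{k,a} is finite. -/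
/-!
Every value of `S^B_{k,a}` is indexed by a pair `(i, j)` from a range that does not depend on
`a`, so `S^B_{k,a}` has at most `2k(n-k) + k²` elements. If it contains all of `1, …, M^B_{k,a}`,
then `M^B_{k,a}` is at most that count; and since `M^B_{k,a}` dominates every `a_u`, the
admissible tuples lie in a fixed box.
-/

open Finset

/-- The step-matrix entry set `S^B_{k,a}`. -/
def SB (n k : ℕ) (a : ℕ → ℤ) : Set ℚ :=
  {x | ∃ i j : ℕ, 1 ≤ i ∧ i ≤ k ∧ 1 ≤ j ∧ j ≤ n - k ∧
    x = (∑ u ∈ Icc (k + 1 - i) (k + j - 1), (a u : ℚ)) + i + j - 1} ∪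
  {x | ∃ i j : ℕ, 1 ≤ i ∧ i ≤ k ∧ 1 ≤ j ∧ j ≤ n - k ∧
    x = (∑ u ∈ Icc (k + 1 - i) (n - 1), (a u : ℚ))
      + (∑ u ∈ Icc (n + 1 - j) (n - 1), (a u : ℚ)) + (a n : ℚ)
      + n - k + i + j - 1} ∪
  {x | ∃ i j : ℕ, 1 ≤ i ∧ i ≤ j ∧ j ≤ k ∧
    x = ((∑ u ∈ Icc (k + 1 - i) (n - 1), (a u : ℚ))
      + (∑ u ∈ Icc (k + 1 - j) (n - 1), (a u : ℚ)) + (a n : ℚ)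
      + i + j + 2 * n - 2 * k - 1) / 2}

/-- `M^B_{k,a}`, the largest entry of the step matrix. -/
def MB (n k : ℕ) (a : ℕ → ℤ) : ℤ :=
  (∑ u ∈ Icc 1 (n - 1), a u) + (∑ u ∈ Icc (k + 1) (n - 1), a u) + a n
    + 2 * (n : ℤ) - (k : ℤ) - 1

theorem le_card_of_forall_intCast_mem {R : Type*} [AddGroupWithOne R] [CharZero R]
    {S : Finset R} {M : ℤ} (h : ∀ l : ℤ, 1 ≤ l → l ≤ M → (l : R) ∈ S) : M ≤ #S := by
  have hcard : #(Icc 1 M) ≤ #S :=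
    card_le_card_of_injOn (fun l : ℤ => (l : R))
      (fun l hl => h l (mem_Icc.1 hl).1 (mem_Icc.1 hl).2)
      Int.cast_injective.injOn
  rw [Int.card_Icc, add_sub_cancel_right] at hcard
  exact (Int.self_le_toNat M).trans (by exact_mod_cast hcard)

theorem exists_finset_SB_subset_card_le (n k : ℕ) (a : ℕ → ℤ) :
    ∃ T : Finset ℚ, SB n k a ⊆ T ∧ #T ≤ 2 * (k * (n - k)) + k * k := by
  let I := Icc 1 k ×ˢ Icc 1 (n - k)
  let J := Icc 1 k ×ˢ Icc 1 k
  refine ⟨I.image (fun p => (∑ u ∈ Icc (k + 1 - p.1) (k + p.2 - 1), (a u : ℚ)) + p.1 + p.2 - 1) ∪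
    I.image (fun p => (∑ u ∈ Icc (k + 1 - p.1) (n - 1), (a u : ℚ))
      + (∑ u ∈ Icc (n + 1 - p.2) (n - 1), (a u : ℚ)) + (a n : ℚ) + n - k + p.1 + p.2 - 1) ∪
    J.image (fun p => ((∑ u ∈ Icc (k + 1 - p.1) (n - 1), (a u : ℚ))
      + (∑ u ∈ Icc (k + 1 - p.2) (n - 1), (a u : ℚ)) + (a n : ℚ)
      + p.1 + p.2 + 2 * n - 2 * k - 1) / 2), ?_, ?_⟩
  · rintro x ((⟨i, j, hi, hik, hj, hjk, rfl⟩ | ⟨i, j, hi, hik, hj, hjk, rfl⟩) |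
      ⟨i, j, hi, hij, hjk, rfl⟩)
    · exact mem_union_left _ <| mem_union_left _ <| mem_image.2
        ⟨(i, j), mem_product.2 ⟨mem_Icc.2 ⟨hi, hik⟩, mem_Icc.2 ⟨hj, hjk⟩⟩, rfl⟩
    · exact mem_union_left _ <| mem_union_right _ <| mem_image.2
        ⟨(i, j), mem_product.2 ⟨mem_Icc.2 ⟨hi, hik⟩, mem_Icc.2 ⟨hj, hjk⟩⟩, rfl⟩
    · exact mem_union_right _ <| mem_image.2 ⟨(i, j),
        mem_product.2 ⟨mem_Icc.2 ⟨hi, hij.trans hjk⟩, mem_Icc.2 ⟨hi.trans hij, hjk⟩⟩, rfl⟩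
  · have hI : #I = k * (n - k) := by simp [I]
    have hJ : #J = k * k := by simp [J]
    calc _ ≤ #I + #I + #J := by
          grw [card_union_le, card_union_le, card_image_le, card_image_le, card_image_le]
      _ = 2 * (k * (n - k)) + k * k := by rw [hI, hJ]; ring

theorem MB_le_of_forall_mem_SB {n k : ℕ} {a : ℕ → ℤ}
    (h : ∀ l : ℤ, 1 ≤ l → l ≤ MB n k a → (l : ℚ) ∈ SB n k a) :
    MB n k a ≤ (2 * (k * (n - k)) + k * k : ℕ) := by
  obtain ⟨T, hST, hT⟩ := exists_finset_SB_subset_card_le n k a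
  exact (le_card_of_forall_intCast_mem fun l h1 h2 => hST (h l h1 h2)).trans (by exact_mod_cast hT)

theorem le_MB {n k : ℕ} {a : ℕ → ℤ} (ha : ∀ u, 1 ≤ u → u ≤ n → 0 ≤ a u) (hkn : k ≤ n - 1)
    {u : ℕ} (hu1 : 1 ≤ u) (hun : u ≤ n) : a u ≤ MB n k a := by
  have hpos : ∀ v ∈ Icc 1 (n - 1), 0 ≤ a v := fun v hv =>
    ha v (mem_Icc.1 hv).1 ((mem_Icc.1 hv).2.trans (n.sub_le 1))
  have hS := sum_nonneg hpos
  have hS' : 0 ≤ ∑ v ∈ Icc (k + 1) (n - 1), a v :=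
    sum_nonneg fun v hv => hpos v (Icc_subset_Icc_left (by omega) hv)
  have han := ha n (by omega) le_rfl
  unfold MB
  rcases lt_or_eq_of_le hun with hlt | rfl
  · have := single_le_sum hpos (mem_Icc.2 ⟨hu1, Nat.le_sub_one_of_lt hlt⟩)
    omega
  · omega

theorem Set.finite_setOf_mem_Icc_of_eq_zero_of_lt (N : ℕ) (lo hi : ℤ) :
    {a : ℕ → ℤ | (∀ u, N < u → a u = 0) ∧ ∀ u, a u ∈ Set.Icc lo hi}.Finite := by
  refine ((Set.Finite.pi fun _ : Fin (N + 1) => Set.finite_Icc lo hi).image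
    fun f u => if h : u < N + 1 then f ⟨u, h⟩ else 0).subset ?_
  rintro a ⟨hzero, hmem⟩
  refine ⟨fun i => a i, fun i _ => hmem i, funext fun u => ?_⟩
  show (if h : u < N + 1 then a u else 0) = a u
  split_ifs with h
  · rfl
  · exact (hzero u (by omega)).symm

theorem finiteness_B_lt_general (n k : ℕ) (hkn : k ≤ n - 1) :
    {a : ℕ → ℤ | (∀ u, 1 ≤ u → u ≤ n → 0 ≤ a u) ∧
      (∀ u, u = 0 ∨ n < u → a u = 0) ∧ a k = 0 ∧
      (∀ l : ℤ, 1 ≤ l → l ≤ MB n k a → (l : ℚ) ∈ SB n k a)}.Finite := by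
  refine (Set.finite_setOf_mem_Icc_of_eq_zero_of_lt n 0 (2 * (k * (n - k)) + k * k : ℕ)).subset ?_
  rintro a ⟨hnonneg, hzero, -, hcover⟩
  refine ⟨fun u hu => hzero u (.inr hu), fun u => ?_⟩
  by_cases hu : 1 ≤ u ∧ u ≤ n
  · exact ⟨hnonneg u hu.1 hu.2,
      (le_MB hnonneg hkn hu.1 hu.2).trans (MB_le_of_forall_mem_SB hcover)⟩
  · rw [hzero u (by omega)]
    exact ⟨le_rfl, by positivity⟩

/-- Finiteness for type `B`, `k < n`: there are only finitely many tuples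
`(a₁, …, aₙ)` of nonnegative integers with `a_k = 0` (encoded as functions
`ℕ → ℤ` supported on `[1, n]`) such that every integer in `[1, M^B_{k,a}]` is an
entry of the step matrix; i.e. only finitely many initialized irreducible
homogeneous ACM bundles on `Bₙ/P(α_k)`. -/
theorem finiteness_B_lt (n k : ℕ) (hn : 2 ≤ n) (hk1 : 1 ≤ k) (hkn : k ≤ n - 1) :
    {a : ℕ → ℤ | (∀ u, 1 ≤ u → u ≤ n → 0 ≤ a u) ∧
      (∀ u, u = 0 ∨ n < u → a u = 0) ∧ a k = 0 ∧
      (∀ l : ℤ, 1 ≤ l → l ≤ MB n k a → (l : ℚ) ∈ SB n k a)}.Finite :=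
  finiteness_B_lt_general n k hkn
end
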